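/- Let V be a vector space over ℂ, D : V → V linear, n a positive integer, J, λ ∈ ℂ, and suppose (θ_j^+), (θ_j^−) satisfy the coupled system for all j ≥ 1 (with θ_j^± = 0 for j < 0). Define φ_l := θ_{2l+1}^− for l ≥ 0 and φ_{−1} := 0. Then (φ_l) satisfies the decoupled recurrence: for every l ≥ 1, 2l(2λ+2l+1)·φ_l = (D² + ((2λ+2l−1)(n+2l−2)/(2n))·J + (2l(2λ+n+2l−1)/(2n))·J)·φ_{l−1} − ((2λ+n+2l−3)(n+2l−2)/(4n²))·J²·φ_{l−2}. -/

import Mathlib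

/-- The coupled system: for every `j ≥ 1`,
`j·θ⁺_j = D θ⁻_{j−1} + ((n+j−2)/(2n))·J·θ⁺_{j−2}` and
`(2λ+j)·θ⁻_j = D θ⁺_{j−1} + ((2λ+n+j−2)/(2n))·J·θ⁻_{j−2}`,
with the convention `θ^±_j = 0` for `j < 0`. -/
def CoupledSystem {V : Type*} [AddCommGroup V] [Module ℂ V] (D : V →ₗ[ℂ] V)
    (n : ℕ) (J lam : ℂ) (θp θm : ℕ → V) : Prop :=
  ∀ j : ℕ, 1 ≤ j →
    (j : ℂ) • θp j
        = D (θm (j - 1))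
          + ((((n : ℂ) + (j : ℂ) - 2) / (2 * (n : ℂ))) * J) • (if 2 ≤ j then θp (j - 2) else 0)
    ∧ (2 * lam + (j : ℂ)) • θm j
        = D (θp (j - 1))
          + (((2 * lam + (n : ℂ) + (j : ℂ) - 2) / (2 * (n : ℂ))) * J)
              • (if 2 ≤ j then θm (j - 2) else 0)

namespace CoupledSystem

variable {V : Type*} [AddCommGroup V] [Module ℂ V] {D : V →ₗ[ℂ] V} {n : ℕ} {J lam : ℂ}
  {θp θm : ℕ → V}

theorem minus_one (h : CoupledSystem D n J lam θp θm) : (2 * lam + 1) • θm 1 = D (θp 0) := by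
  simpa using (h 1 le_rfl).2

theorem plus_add_two (h : CoupledSystem D n J lam θp θm) (j : ℕ) :
    ((j : ℂ) + 2) • θp (j + 2)
      = D (θm (j + 1)) + (((n : ℂ) + j) / (2 * n) * J) • θp j := by
  have e := (h (j + 2) (by omega)).1
  simp only [show j + 2 - 1 = j + 1 by omega, Nat.add_sub_cancel, le_add_self, if_true] at e
  push_cast at e
  linear_combination (norm := module) e

theorem minus_add_two (h : CoupledSystem D n J lam θp θm) (j : ℕ) :
    (2 * lam + j + 2) • θm (j + 2)
      = D (θp (j + 1)) + ((2 * lam + n + j) / (2 * n) * J) • θm j := by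
  have e := (h (j + 2) (by omega)).2
  simp only [show j + 2 - 1 = j + 1 by omega, Nat.add_sub_cancel, le_add_self, if_true] at e
  push_cast at e
  linear_combination (norm := module) e

theorem minus_add_three (h : CoupledSystem D n J lam θp θm) (j : ℕ) :
    (((j : ℂ) + 2) * (2 * lam + j + 3)) • θm (j + 3)
      = D (D (θm (j + 1))) + (((n : ℂ) + j) / (2 * n) * J) • D (θp j)
        + (((j : ℂ) + 2) * ((2 * lam + n + j + 1) / (2 * n) * J)) • θm (j + 1) := by
  have hm := h.minus_add_two (j + 1)
  have hp := congrArg D (h.plus_add_two j)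
  rw [map_smul, map_add, map_smul] at hp
  push_cast at hm
  linear_combination (norm := module) ((j : ℂ) + 2) • hm + hp

end CoupledSystem

theorem stmt11_general {V : Type*} [AddCommGroup V] [Module ℂ V] (D : V →ₗ[ℂ] V)
    (n : ℕ) (J lam : ℂ) (θp θm : ℕ → V)
    (h : CoupledSystem D n J lam θp θm)
    (φ : ℕ → V) (hφ : ∀ l : ℕ, φ l = θm (2 * l + 1)) :
    ∀ l : ℕ, 1 ≤ l →
      (2 * (l : ℂ) * (2 * lam + 2 * (l : ℂ) + 1)) • φ l
        = D (D (φ (l - 1)))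
          + ((2 * lam + 2 * (l : ℂ) - 1) * ((n : ℂ) + 2 * (l : ℂ) - 2) / (2 * (n : ℂ)) * J
              + 2 * (l : ℂ) * (2 * lam + (n : ℂ) + 2 * (l : ℂ) - 1) / (2 * (n : ℂ)) * J)
              • φ (l - 1)
          - ((2 * lam + (n : ℂ) + 2 * (l : ℂ) - 3) * ((n : ℂ) + 2 * (l : ℂ) - 2)
              / (4 * (n : ℂ) ^ 2) * J ^ 2) • (if 2 ≤ l then φ (l - 2) else 0) := by
  intro l hl
  obtain ⟨m, rfl⟩ : ∃ m, l = m + 1 := ⟨l - 1, by omega⟩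
  have key := h.minus_add_three (2 * m)
  rcases m with _ | k
  · have e := h.minus_one
    norm_num [hφ] at key ⊢
    linear_combination (norm := module) key - ((n : ℂ) / (2 * n) * J) • e
  · have e := h.minus_add_two (2 * k + 1)
    simp only [hφ, if_pos (show 2 ≤ k + 1 + 1 by omega), Nat.add_sub_cancel,
      show 2 * (k + 1) = 2 * k + 1 + 1 by ring, show 2 * k + 1 + 2 = 2 * k + 3 by ring] at key e ⊢
    push_cast at e key ⊢
    linear_combination (norm := module) key - (((n : ℂ) + 2 * (k + 1)) / (2 * n) * J) • e

/-- The sequence `φ_l := θ⁻_{2l+1}` (with `φ_{−1} := 0`) satisfies the decoupled recurrence: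
for every `l ≥ 1`,
`2l(2λ+2l+1)·φ_l = (D² + ((2λ+2l−1)(n+2l−2)/(2n))·J + (2l(2λ+n+2l−1)/(2n))·J)·φ_{l−1}
  − ((2λ+n+2l−3)(n+2l−2)/(4n²))·J²·φ_{l−2}`. -/
theorem stmt11 {V : Type*} [AddCommGroup V] [Module ℂ V] (D : V →ₗ[ℂ] V)
    (n : ℕ) (hn : 0 < n) (J lam : ℂ) (θp θm : ℕ → V)
    (h : CoupledSystem D n J lam θp θm)
    (φ : ℕ → V) (hφ : ∀ l : ℕ, φ l = θm (2 * l + 1)) :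
    ∀ l : ℕ, 1 ≤ l →
      (2 * (l : ℂ) * (2 * lam + 2 * (l : ℂ) + 1)) • φ l
        = D (D (φ (l - 1)))
          + ((2 * lam + 2 * (l : ℂ) - 1) * ((n : ℂ) + 2 * (l : ℂ) - 2) / (2 * (n : ℂ)) * J
              + 2 * (l : ℂ) * (2 * lam + (n : ℂ) + 2 * (l : ℂ) - 1) / (2 * (n : ℂ)) * J)
              • φ (l - 1)
          - ((2 * lam + (n : ℂ) + 2 * (l : ℂ) - 3) * ((n : ℂ) + 2 * (l : ℂ) - 2)
              / (4 * (n : ℂ) ^ 2) * J ^ 2) • (if 2 ≤ l then φ (l - 2) else 0) :=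
  stmt11_general D n J lam θp θm h φ hφ
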